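/- For all n ≥ 1, the length of the T-module T/Iₙ equals (2(q+m)+1)·binom(n+1,2) = (2(q+m)+1)·n(n+1)/2. -/

import Mathlib

open MvPolynomial

/-- The monomial ideal `J = (x₂², x₂x₃^{q+m}, x₃^{q+m+1})` of `T = k[x₂,x₃]`
(here `X 0 = x₂`, `X 1 = x₃`). -/
noncomputable def Jideal (k : Type*) [Field k] (q m : ℕ) : Ideal (MvPolynomial (Fin 2) k) :=
  Ideal.span {X 0 ^ 2, X 0 * X 1 ^ (q+m), X 1 ^ (q+m+1)}

/-- The monomial ideal `F = (x₃^{2(q+m)+1})` of `T`. -/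
noncomputable def Fideal (k : Type*) [Field k] (q m : ℕ) : Ideal (MvPolynomial (Fin 2) k) :=
  Ideal.span {X 1 ^ (2*(q+m)+1)}

/-- `Iₙ = Σ_{n₁+2n₂=n} F^{n₂} J^{n₁}`. -/
noncomputable def Iideal (k : Type*) [Field k] (q m n : ℕ) : Ideal (MvPolynomial (Fin 2) k) :=
  ⨆ (c : ℕ × ℕ) (_ : c.1 + 2 * c.2 = n), (Fideal k q m) ^ c.2 * (Jideal k q m) ^ c.1

/-- The length of a module, as the Krull dimension of its lattice of submodules. -/
noncomputable def moduleLength (R M : Type*) [Ring R] [AddCommGroup M] [Module R M] :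
    WithBot ℕ∞ :=
  Order.krullDim (Submodule R M)

/-!
Writing `b = 2(q+m)+1`, every `F^{n₂}J^{n₁}` is a monomial ideal, and so is `Iₙ`: the monomial
`x₂^i x₃^j` lies in `Iₙ` exactly when `n ≤ ⌊i/2⌋ + ⌊(2j + i mod 2)/b⌋`. This weight is
superadditive as soon as `b ≥ 3`, which gives one inclusion; the other is an explicit choice of
generators.

For a monomial ideal with finitely many standard monomials, the length of the quotient is their
number: putting them back one at a time, a maximal one first, gives a strict chain of monomial
ideals of that length, while the `k`-dimension bounds the length from above. The map
`(i, j) ↦ (⌊i/2⌋, 2j + i mod 2)` identifies the standard monomials of `Iₙ` with the pairs `(s, r)`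
with `s < n` and `r < (n - s) b`, so there are `b · C(n+1, 2)` of them.
-/

open scoped Pointwise

theorem Finset.sum_range_tsub_eq_choose_two (n : ℕ) :
    ∑ s ∈ Finset.range n, (n - s) = (n + 1).choose 2 := by
  induction n with
  | zero => simp
  | succ n ih =>
    rw [Finset.sum_range_succ', Nat.choose_succ_succ' (n + 1) 1, Nat.choose_one_right, ← ih]
    simp [add_comm]

theorem Module.length_le_length_of_isScalarTower (A R M : Type*) [Ring A] [Ring R] [SMul A R]
    [AddCommGroup M] [Module A M] [Module R M] [IsScalarTower A R M] :
    Module.length R M ≤ Module.length A M := by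
  have := Submodule.length_le_length_restrictScalars A (⊤ : Submodule R M)
  rwa [Module.length_top, Submodule.restrictScalars_top, Module.length_top] at this

theorem Ideal.pow_le_of_mul_le {A : Type*} [CommSemiring A] {R : ℕ → Ideal A}
    (hmul : ∀ n n', R n * R n' ≤ R (n + n')) (h0 : R 0 = ⊤) {I : Ideal A} {i : ℕ}
    (hI : I ≤ R i) (c : ℕ) : I ^ c ≤ R (i * c) := by
  induction c with
  | zero => simp [h0]
  | succ c ih => exact (mul_le_mul' ih hI).trans (hmul _ _)

namespace MvPolynomial

section CommSemiring

variable {σ R : Type*} [CommSemiring R]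

theorem mem_restrictSupportIdeal {s : Set (σ →₀ ℕ)} {hs : IsUpperSet s} {p : MvPolynomial σ R} :
    p ∈ restrictSupportIdeal R s hs ↔ p ∈ restrictSupport R s := Iff.rfl

theorem restrictSupport_sup (s t : Set (σ →₀ ℕ)) :
    restrictSupport R s ⊔ restrictSupport R t = restrictSupport R (s ∪ t) := by
  simp only [restrictSupport_eq_span, Set.image_union, Submodule.span_union]

theorem restrictSupportIdeal_mul_le {s t u : Set (σ →₀ ℕ)} (hs : IsUpperSet s)
    (ht : IsUpperSet t) (hu : IsUpperSet u) (h : s + t ⊆ u) :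
    restrictSupportIdeal R s hs * restrictSupportIdeal R t ht ≤ restrictSupportIdeal R u hu :=
  Ideal.mul_le.2 fun _ hp _ hq =>
    restrictSupport_mono R h (restrictSupport_add R s t ▸ Submodule.mul_mem_mul hp hq)

theorem restrictSupportIdeal_le {s : Set (σ →₀ ℕ)} {hs : IsUpperSet s}
    {I : Ideal (MvPolynomial σ R)} (h : ∀ d ∈ s, monomial d 1 ∈ I) :
    restrictSupportIdeal R s hs ≤ I := by
  have : restrictSupport R s ≤ I.restrictScalars R := by
    rw [restrictSupport_eq_span, Submodule.span_le]
    rintro _ ⟨d, hd, rfl⟩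
    exact h d hd
  exact fun p hp => this hp

theorem monomial_one_eq_X_pow_mul_X_pow (d : Fin 2 →₀ ℕ) :
    (monomial d 1 : MvPolynomial (Fin 2) R) = X 0 ^ d 0 * X 1 ^ d 1 := by
  simp [monomial_eq, Finsupp.prod_fintype, Fin.prod_univ_two]

theorem X_pow_mul_X_pow_eq_monomial (i j : ℕ) :
    (X 0 ^ i * X 1 ^ j : MvPolynomial (Fin 2) R) =
      monomial (Finsupp.single 0 i + Finsupp.single 1 j) 1 := by
  rw [X_pow_eq_monomial, X_pow_eq_monomial, monomial_mul, one_mul]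

theorem X_pow_mul_X_pow_mem_of_le {I : Ideal (MvPolynomial (Fin 2) R)} {i j i' j' : ℕ}
    (h : X 0 ^ i * X 1 ^ j ∈ I) (hi : i ≤ i') (hj : j ≤ j') : X 0 ^ i' * X 1 ^ j' ∈ I := by
  rw [← Nat.sub_add_cancel hi, ← Nat.sub_add_cancel hj, pow_add, pow_add, mul_mul_mul_comm]
  exact I.mul_mem_left _ h

end CommSemiring

section Field

variable {σ k : Type*} [Field k]

theorem length_restrictSupport_finset (D : Finset (σ →₀ ℕ)) :
    Module.length k (restrictSupport k (D : Set (σ →₀ ℕ))) = D.card := by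
  rw [(basisRestrictSupport k _).repr.length_eq, Module.length_finsupp]
  simp

theorem length_quotient_restrictSupportIdeal_le {S : Set (σ →₀ ℕ)} (hS : IsUpperSet S)
    {D : Finset (σ →₀ ℕ)} (hD : (D : Set (σ →₀ ℕ)) = Sᶜ) :
    Module.length (MvPolynomial σ k) (MvPolynomial σ k ⧸ restrictSupportIdeal k S hS) ≤
      D.card := by
  let I := restrictSupportIdeal k S hS
  let f := (Ideal.Quotient.mkₐ k I).toLinearMap ∘ₗ
    (restrictSupport k (D : Set (σ →₀ ℕ))).subtype
  have hf : Function.Surjective f := by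
    rintro ⟨p⟩
    have hp : p ∈ restrictSupport k (D : Set (σ →₀ ℕ)) ⊔ restrictSupport k S := by
      simp [restrictSupport_sup, hD]
    obtain ⟨y, hy, z, hz, rfl⟩ := Submodule.mem_sup.1 hp
    refine ⟨⟨y, hy⟩, (Ideal.Quotient.mk_eq_mk_iff_sub_mem _ _).2 ?_⟩
    simpa [I, mem_restrictSupportIdeal] using hz
  calc Module.length (MvPolynomial σ k) (MvPolynomial σ k ⧸ I)
      ≤ Module.length k (MvPolynomial σ k ⧸ I) :=
        Module.length_le_length_of_isScalarTower _ _ _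
    _ ≤ Module.length k (restrictSupport k (D : Set (σ →₀ ℕ))) :=
        Module.length_le_of_surjective f hf
    _ = D.card := length_restrictSupport_finset D

theorem card_le_coheight_restrictSupportIdeal (D : Finset (σ →₀ ℕ)) {S : Set (σ →₀ ℕ)}
    (hS : IsUpperSet S) (hD : (D : Set (σ →₀ ℕ)) = Sᶜ) :
    (D.card : ℕ∞) ≤ Order.coheight (restrictSupportIdeal k S hS) := by
  classical
  induction D using Finset.strongInduction generalizing S with
  | H D ih =>
    rcases D.eq_empty_or_nonempty with rfl | hne
    · simp
    obtain ⟨d, hdD, hdmax⟩ := Finset.exists_maximal hne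
    have hmem : ∀ e, e ∈ D ↔ e ∉ S := fun e => by rw [← Finset.mem_coe, hD]; rfl
    have hdS : d ∉ S := (hmem d).1 hdD
    have hS' : IsUpperSet (insert d S) := by
      rintro a b hab (rfl | ha)
      · by_contra hb
        exact hb (Or.inl (le_antisymm (hdmax ((hmem b).2 fun h => hb (Or.inr h)) hab) hab))
      · exact Or.inr (hS hab ha)
    have hD' : ((D.erase d : Finset (σ →₀ ℕ)) : Set (σ →₀ ℕ)) = (insert d S)ᶜ := by
      ext e
      simp only [Finset.coe_erase, Set.mem_sdiff, SetLike.mem_coe, hmem, Set.mem_singleton_iff,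
        Set.mem_compl_iff, Set.mem_insert_iff, not_or]
      tauto
    have hlt : restrictSupportIdeal k S hS < restrictSupportIdeal k (insert d S) hS' :=
      SetLike.lt_iff_le_and_exists.2 ⟨restrictSupport_mono k (Set.subset_insert d S),
        monomial d 1, by simp [mem_restrictSupportIdeal], by simp [mem_restrictSupportIdeal, hdS]⟩
    calc (D.card : ℕ∞) = ((D.erase d).card : ℕ∞) + 1 := by
          rw [← Finset.card_erase_add_one hdD]; push_cast; rfl
      _ ≤ Order.coheight (restrictSupportIdeal k (insert d S) hS') + 1 := by
          gcongr; exact ih _ (Finset.erase_ssubset hdD) hS' hD'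
      _ ≤ _ := Order.coheight_add_one_le hlt

theorem length_quotient_restrictSupportIdeal {S : Set (σ →₀ ℕ)} (hS : IsUpperSet S)
    {D : Finset (σ →₀ ℕ)} (hD : (D : Set (σ →₀ ℕ)) = Sᶜ) :
    Module.length (MvPolynomial σ k) (MvPolynomial σ k ⧸ restrictSupportIdeal k S hS) =
      D.card :=
  (length_quotient_restrictSupportIdeal_le hS hD).antisymm
    (Module.length_quotient (N := restrictSupportIdeal k S hS) ▸
      card_le_coheight_restrictSupportIdeal D hS hD)

end Field

end MvPolynomial

def staircaseWeight (a i j : ℕ) : ℕ := i / 2 + (2 * j + i % 2) / (2 * a + 1)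

theorem staircaseWeight_add_le {a : ℕ} (ha : 1 ≤ a) (i j i' j' : ℕ) :
    staircaseWeight a i j + staircaseWeight a i' j' ≤ staircaseWeight a (i + i') (j + j') := by
  have hb : 0 < 2 * a + 1 := by omega
  unfold staircaseWeight
  obtain hc | hc : i % 2 + i' % 2 < 2 ∨ i % 2 + i' % 2 = 2 := by omega
  · have h1 : (i + i') / 2 = i / 2 + i' / 2 := by omega
    have h2 : 2 * (j + j') + (i + i') % 2 = (2 * j + i % 2) + (2 * j' + i' % 2) := by omega
    have := Nat.div_add_div_le_add_div (x := 2 * j + i % 2) (y := 2 * j' + i' % 2)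
      (z := 2 * a + 1)
    rw [h1, h2]
    omega
  · -- both odd: the carry in `(i + i') / 2` makes up for the numerator losing `2 ≤ b`
    have h1 : (i + i') / 2 = i / 2 + i' / 2 + 1 := by omega
    have h2 : (2 * j + i % 2) + (2 * j' + i' % 2) ≤
        2 * (j + j') + (i + i') % 2 + (2 * a + 1) := by
      omega
    have := Nat.div_add_div_le_add_div.trans (Nat.div_le_div_right (c := 2 * a + 1) h2)
    rw [Nat.add_div_right _ hb] at this
    rw [h1]
    omega

def staircase (a n : ℕ) : Set (Fin 2 →₀ ℕ) := {d | n ≤ staircaseWeight a (d 0) (d 1)}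

theorem isUpperSet_staircase {a : ℕ} (ha : 1 ≤ a) (n : ℕ) : IsUpperSet (staircase a n) := by
  intro d e hde hd
  have := staircaseWeight_add_le ha (d 0) (d 1) ((e - d) 0) ((e - d) 1)
  rw [← Finsupp.add_apply, ← Finsupp.add_apply, add_tsub_cancel_of_le hde] at this
  exact hd.trans (le_of_add_le_left this)

theorem staircase_add_subset {a : ℕ} (ha : 1 ≤ a) (n n' : ℕ) :
    staircase a n + staircase a n' ⊆ staircase a (n + n') := by
  rintro _ ⟨d, hd, e, he, rfl⟩
  exact (add_le_add hd he).trans (staircaseWeight_add_le ha _ _ _ _)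

theorem exists_finset_coe_eq_compl_staircase (a n : ℕ) :
    ∃ D : Finset (Fin 2 →₀ ℕ), (D : Set (Fin 2 →₀ ℕ)) = (staircase a n)ᶜ ∧
      D.card = (2 * a + 1) * (n + 1).choose 2 := by
  classical
  have hb : 0 < 2 * a + 1 := by omega
  let e : (Σ _ : ℕ, ℕ) → Fin 2 →₀ ℕ := fun p =>
    Finsupp.single 0 (2 * p.1 + p.2 % 2) + Finsupp.single 1 (p.2 / 2)
  have e0 : ∀ s r, e ⟨s, r⟩ 0 = 2 * s + r % 2 := by simp [e]
  have e1 : ∀ s r, e ⟨s, r⟩ 1 = r / 2 := by simp [e]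
  have he : Function.Injective e := by
    rintro ⟨s, r⟩ ⟨s', r'⟩ h
    have h0 := e0 s r ▸ e0 s' r' ▸ DFunLike.congr_fun h 0
    have h1 := e1 s r ▸ e1 s' r' ▸ DFunLike.congr_fun h 1
    obtain ⟨rfl, rfl⟩ : s = s' ∧ r = r' := by omega
    rfl
  refine ⟨((Finset.range n).sigma fun s => Finset.range ((n - s) * (2 * a + 1))).image e, ?_, ?_⟩
  · ext d
    simp only [Finset.coe_image, Set.mem_image, Finset.mem_coe, Finset.mem_sigma,
      Finset.mem_range, Set.mem_compl_iff, staircase, Set.mem_ofPred_eq, not_le, staircaseWeight]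
    constructor
    · rintro ⟨⟨s, r⟩, ⟨hs : s < n, hr : r < (n - s) * (2 * a + 1)⟩, rfl⟩
      have := (Nat.div_lt_iff_lt_mul hb).2 hr
      rw [e0, e1, show (2 * s + r % 2) / 2 = s by omega,
        show 2 * (r / 2) + (2 * s + r % 2) % 2 = r by omega]
      omega
    · intro hd
      have hr : (2 * d 1 + d 0 % 2) / (2 * a + 1) < n - d 0 / 2 := by omega
      refine ⟨⟨d 0 / 2, 2 * d 1 + d 0 % 2⟩,
        ⟨Nat.sub_pos_iff_lt.1 (Nat.zero_lt_of_lt hr), (Nat.div_lt_iff_lt_mul hb).1 hr⟩,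
        Finsupp.ext (Fin.forall_fin_two.2 ⟨?_, ?_⟩)⟩
      · rw [e0]; omega
      · rw [e1]; omega
  · rw [Finset.card_image_of_injective _ he, Finset.card_sigma]
    simp only [Finset.card_range]
    rw [← Finset.sum_mul, Finset.sum_range_tsub_eq_choose_two, mul_comm]

section StaircaseIdeal

variable (k : Type*) [Field k] (q m : ℕ) (ha : 1 ≤ q + m)

noncomputable abbrev staircaseIdeal (n : ℕ) : Ideal (MvPolynomial (Fin 2) k) :=
  restrictSupportIdeal k (staircase (q + m) n) (isUpperSet_staircase ha n)

theorem X_pow_mul_X_pow_mem_staircaseIdeal_iff {n i j : ℕ} :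
    X 0 ^ i * X 1 ^ j ∈ staircaseIdeal k q m ha n ↔ n ≤ staircaseWeight (q + m) i j := by
  simp [X_pow_mul_X_pow_eq_monomial, mem_restrictSupportIdeal, staircase]

theorem staircaseIdeal_mul_le (n n' : ℕ) :
    staircaseIdeal k q m ha n * staircaseIdeal k q m ha n' ≤ staircaseIdeal k q m ha (n + n') :=
  restrictSupportIdeal_mul_le _ _ _ (staircase_add_subset ha n n')

theorem staircaseIdeal_zero : staircaseIdeal k q m ha 0 = ⊤ := by
  ext p
  simp [mem_restrictSupportIdeal, staircase]

theorem Jideal_le_staircaseIdeal : Jideal k q m ≤ staircaseIdeal k q m ha 1 := by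
  have hb : 0 < 2 * (q + m) + 1 := by omega
  rw [Jideal, Ideal.span_le]
  rintro _ (rfl | rfl | rfl)
  · simpa using (X_pow_mul_X_pow_mem_staircaseIdeal_iff k q m ha (n := 1) (i := 2) (j := 0)).2
      (by simp [staircaseWeight])
  · simpa using (X_pow_mul_X_pow_mem_staircaseIdeal_iff k q m ha (n := 1) (i := 1)
      (j := q + m)).2 (by simp [staircaseWeight, Nat.div_self hb])
  · simpa using (X_pow_mul_X_pow_mem_staircaseIdeal_iff k q m ha (n := 1) (i := 0)
      (j := q + m + 1)).2 (by simp [staircaseWeight, Nat.le_div_iff_mul_le hb])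

theorem Fideal_le_staircaseIdeal : Fideal k q m ≤ staircaseIdeal k q m ha 2 := by
  rw [Fideal, Ideal.span_le, Set.singleton_subset_iff]
  simpa using (X_pow_mul_X_pow_mem_staircaseIdeal_iff k q m ha (n := 2) (i := 0)
    (j := 2 * (q + m) + 1)).2 (by simp [staircaseWeight])

theorem Iideal_le_staircaseIdeal (n : ℕ) : Iideal k q m n ≤ staircaseIdeal k q m ha n := by
  refine iSup₂_le fun c hc => ?_
  have hmul := staircaseIdeal_mul_le k q m ha
  have h0 := staircaseIdeal_zero k q m ha
  calc Fideal k q m ^ c.2 * Jideal k q m ^ c.1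
      ≤ staircaseIdeal k q m ha (2 * c.2) * staircaseIdeal k q m ha (1 * c.1) :=
        mul_le_mul' (Ideal.pow_le_of_mul_le hmul h0 (Fideal_le_staircaseIdeal k q m ha) c.2)
          (Ideal.pow_le_of_mul_le hmul h0 (Jideal_le_staircaseIdeal k q m ha) c.1)
    _ ≤ staircaseIdeal k q m ha n := by
        rw [← hc, one_mul, add_comm]
        exact hmul _ _

end StaircaseIdeal

section Generators

variable {k : Type*} [Field k] {q m : ℕ}

theorem X_pow_mul_X_pow_mem_Fideal_pow_mul_Jideal_pow (c₁ c₂ c₃ w : ℕ) :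
    X 0 ^ (2 * c₁ + c₂) * X 1 ^ ((q + m) * c₂ + (q + m + 1) * c₃ + (2 * (q + m) + 1) * w)
      ∈ Fideal k q m ^ w * Jideal k q m ^ (c₁ + c₂ + c₃) := by
  have key : (X 0 ^ (2 * c₁ + c₂) *
      X 1 ^ ((q + m) * c₂ + (q + m + 1) * c₃ + (2 * (q + m) + 1) * w) : MvPolynomial (Fin 2) k) =
      (X 1 ^ (2 * (q + m) + 1)) ^ w *
        ((X 0 ^ 2) ^ c₁ * (X 0 * X 1 ^ (q + m)) ^ c₂ * (X 1 ^ (q + m + 1)) ^ c₃) := by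
    ring
  rw [key, pow_add, pow_add]
  refine Ideal.mul_mem_mul (Ideal.pow_mem_pow (Ideal.subset_span (Set.mem_singleton _)) w)
    (Ideal.mul_mem_mul (Ideal.mul_mem_mul ?_ ?_) ?_) <;>
    exact Ideal.pow_mem_pow (Ideal.subset_span (by simp)) _

theorem X_pow_mul_X_pow_mem_Iideal_of_le {n i j : ℕ} (c₁ c₂ c₃ w : ℕ)
    (hn : c₁ + c₂ + c₃ + 2 * w = n) (hi : 2 * c₁ + c₂ ≤ i)
    (hj : (q + m) * c₂ + (q + m + 1) * c₃ + (2 * (q + m) + 1) * w ≤ j) :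
    X 0 ^ i * X 1 ^ j ∈ Iideal k q m n :=
  X_pow_mul_X_pow_mem_of_le
    (le_iSup₂_of_le (f := fun (c : ℕ × ℕ) (_ : c.1 + 2 * c.2 = n) =>
      Fideal k q m ^ c.2 * Jideal k q m ^ c.1) (c₁ + c₂ + c₃, w) hn le_rfl
      (X_pow_mul_X_pow_mem_Fideal_pow_mul_Jideal_pow c₁ c₂ c₃ w)) hi hj

theorem X_pow_mul_X_pow_mem_Iideal {n i j : ℕ} (h : n ≤ staircaseWeight (q + m) i j) :
    X 0 ^ i * X 1 ^ j ∈ Iideal k q m n := by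
  rcases le_or_gt n (i / 2) with hn | hn
  · exact X_pow_mul_X_pow_mem_Iideal_of_le n 0 0 0 (by omega) (by omega) (by omega)
  have hz : (n - i / 2) * (2 * (q + m) + 1) ≤ 2 * j + i % 2 := by
    rw [← Nat.le_div_iff_mul_le (by omega)]
    unfold staircaseWeight at h
    omega
  -- `x₂^(2⌊i/2⌋)` comes from `J^⌊i/2⌋`; the remaining degree `n - ⌊i/2⌋` from powers of `F`,
  -- plus one generator of `J` when it is odd
  obtain ⟨w, hw | hw⟩ := Nat.even_or_odd' (n - i / 2)
  · have : 2 * w * (2 * (q + m) + 1) = 2 * ((2 * (q + m) + 1) * w) := by ring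
    rw [hw, this] at hz
    exact X_pow_mul_X_pow_mem_Iideal_of_le (i / 2) 0 0 w (by omega) (by omega) (by omega)
  · have : (2 * w + 1) * (2 * (q + m) + 1) =
        2 * ((2 * (q + m) + 1) * w) + 2 * (q + m) + 1 := by
      ring
    rw [hw, this] at hz
    rcases Nat.mod_two_eq_zero_or_one i with hi | hi
    · exact X_pow_mul_X_pow_mem_Iideal_of_le (i / 2) 0 1 w (by omega) (by omega) (by omega)
    · exact X_pow_mul_X_pow_mem_Iideal_of_le (i / 2) 1 0 w (by omega) (by omega) (by omega)

theorem staircaseIdeal_le_Iideal (ha : 1 ≤ q + m) (n : ℕ) :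
    staircaseIdeal k q m ha n ≤ Iideal k q m n :=
  restrictSupportIdeal_le fun d hd => by
    rw [monomial_one_eq_X_pow_mul_X_pow]
    exact X_pow_mul_X_pow_mem_Iideal hd

theorem Iideal_eq_staircaseIdeal (ha : 1 ≤ q + m) (n : ℕ) :
    Iideal k q m n = staircaseIdeal k q m ha n :=
  (Iideal_le_staircaseIdeal k q m ha n).antisymm (staircaseIdeal_le_Iideal ha n)

end Generators

theorem statement7_general (k : Type*) [Field k] (q m : ℕ) (hq : 1 ≤ q) :
    ∀ n : ℕ, 1 ≤ n →
      moduleLength (MvPolynomial (Fin 2) k)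
          (MvPolynomial (Fin 2) k ⧸ Iideal k q m n)
        = (((2*(q+m)+1) * Nat.choose (n+1) 2 : ℕ) : WithBot ℕ∞) := by
  intro n _
  have ha : 1 ≤ q + m := hq.trans (Nat.le_add_right q m)
  obtain ⟨D, hD, hcard⟩ := exists_finset_coe_eq_compl_staircase (q + m) n
  rw [moduleLength, ← Module.coe_length, Iideal_eq_staircaseIdeal ha n,
    length_quotient_restrictSupportIdeal _ hD, hcard]
  rfl

/-- For all `n ≥ 1`, `ℓ_T(T/Iₙ) = (2(q+m)+1)·C(n+1,2)`. -/
theorem statement7 (k : Type*) [Field k] (q m : ℕ) (hq : 1 ≤ q) (hm : 1 ≤ m) :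
    ∀ n : ℕ, 1 ≤ n →
      moduleLength (MvPolynomial (Fin 2) k)
          (MvPolynomial (Fin 2) k ⧸ Iideal k q m n)
        = (((2*(q+m)+1) * Nat.choose (n+1) 2 : ℕ) : WithBot ℕ∞) :=
  statement7_general k q m hq
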